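/- arXiv:1011.1608 — 3 statements merged into one kernel-verified Lean document; each statement's English description precedes it below -/
import Mathlib

section
/- Fix constants m ≥ 1 (an integer), C > 0, and 0 < γ < 1. Suppose H : [0,T) × ℝ → ℝ is defined by H(t,ρ) = e^{-t} e^{γρ} u''(t,ρ) where u solves the parabolic equation ∂_t u'' = u⁗/u'' − (u''')²/(u'')² + m u'''/u' − m(u'')²/(u')² + n u'''/(a+u') − n(u'')²/(a+u')², and for each t, H(t,ρ) → 0 as |ρ| → ∞. If H attains an interior maximum over [0,t₀] × ℝ at (t₀, ρ₀) with t₀ > 0, then at (t₀,ρ₀): u''' = −γ u'' and u⁗ ≤ −γ u''', and consequently ∂_t H ≤ −H at (t₀,ρ₀). -/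
open Set Filter Topology

lemma second_deriv_test_max {f : ℝ → ℝ} (hf : Differentiable ℝ f)
    (hf' : Differentiable ℝ (deriv f)) {x : ℝ} (hmax : ∀ y, f y ≤ f x) :
    deriv (deriv f) x ≤ 0 := by
  by_contra h
  push_neg at h
  have hgx : deriv f x = 0 :=
    (IsLocalMax.deriv_eq_zero (Filter.Eventually.of_forall fun y => hmax y))
  have hg : HasDerivAt (deriv f) (deriv (deriv f) x) x := (hf' x).hasDerivAt
  have hslope : Tendsto (slope (deriv f) x) (𝓝[≠] x) (𝓝 (deriv (deriv f) x)) :=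
    hasDerivAt_iff_tendsto_slope.mp hg
  have hev : ∀ᶠ y in 𝓝[≠] x, 0 < slope (deriv f) x y :=
    hslope.eventually (eventually_gt_nhds h)
  have hev' : ∀ᶠ y in 𝓝[>] x, 0 < slope (deriv f) x y :=
    hev.filter_mono (nhdsWithin_mono x fun y hy => ne_of_gt hy)
  obtain ⟨b, hb, hsub⟩ := (mem_nhdsGT_iff_exists_Ioo_subset).mp hev'
  have hb' : x < b := hb
  have hpos : ∀ y ∈ Ioo x b, 0 < deriv f y := by
    intro y hy
    have h1 : 0 < slope (deriv f) x y := hsub hy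
    rw [slope_def_field, div_pos_iff] at h1
    rcases h1 with ⟨h2, _⟩ | ⟨_, h3⟩
    · rw [hgx] at h2; linarith
    · linarith [hy.1]
  have hmono : StrictMonoOn f (Icc x b) :=
    strictMonoOn_of_deriv_pos (convex_Icc x b) hf.continuous.continuousOn
      (by rwa [interior_Icc])
  have hxb : x < (x+b)/2 := by linarith
  have h2 : f x < f ((x+b)/2) :=
    hmono (left_mem_Icc.mpr (le_of_lt hb')) ⟨le_of_lt hxb, by linarith⟩ hxb
  exact absurd (hmax ((x+b)/2)) (not_le.mpr h2)

/-- Maximum principle computation for `H(t,ρ) = e^{-t} e^{γρ} u''(t,ρ)` along the evolution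
equation (2.13) for `u''`: at an interior maximum of `H` over `[0,t₀] × ℝ` one has
`u''' = -γ u''`, `u⁗ ≤ -γ u'''`, and consequently `∂ₜ H ≤ -H` there. -/
theorem stmt_10 (m n : ℕ) (hm : 1 ≤ m) (hn : 1 ≤ n) (C : ℝ) (hC : 0 < C)
    (γ : ℝ) (hγ0 : 0 < γ) (hγ1 : γ < 1) (T : ℝ) (hT : 0 < T)
    (u : ℝ → ℝ → ℝ) (a : ℝ → ℝ) (ha : ∀ t, 0 ≤ a t)
    (hsmooth : ∀ t ∈ Set.Ico (0:ℝ) T, ContDiff ℝ (⊤ : ℕ∞) (u t))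
    (hu' : ∀ t ∈ Set.Ico (0:ℝ) T, ∀ ρ : ℝ, 0 < deriv (u t) ρ)
    (hu'' : ∀ t ∈ Set.Ico (0:ℝ) T, ∀ ρ : ℝ, 0 < deriv (deriv (u t)) ρ)
    (hPDE : ∀ t ∈ Set.Ico (0:ℝ) T, ∀ ρ : ℝ,
      deriv (fun s => deriv (deriv (u s)) ρ) t =
        deriv (deriv (deriv (deriv (u t)))) ρ / deriv (deriv (u t)) ρ
        - (deriv (deriv (deriv (u t))) ρ) ^ 2 / (deriv (deriv (u t)) ρ) ^ 2
        + (m : ℝ) * deriv (deriv (deriv (u t))) ρ / deriv (u t) ρ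
        - (m : ℝ) * (deriv (deriv (u t)) ρ) ^ 2 / (deriv (u t) ρ) ^ 2
        + (n : ℝ) * deriv (deriv (deriv (u t))) ρ / (a t + deriv (u t) ρ)
        - (n : ℝ) * (deriv (deriv (u t)) ρ) ^ 2 / (a t + deriv (u t) ρ) ^ 2)
    (H : ℝ → ℝ → ℝ)
    (hH : ∀ t ρ, H t ρ = Real.exp (-t) * Real.exp (γ * ρ) * deriv (deriv (u t)) ρ)
    (hdecay : ∀ t ∈ Set.Ico (0:ℝ) T,
      Filter.Tendsto (H t) Filter.atTop (nhds 0) ∧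
      Filter.Tendsto (H t) Filter.atBot (nhds 0))
    (t₀ ρ₀ : ℝ) (ht₀ : 0 < t₀) (ht₀T : t₀ < T)
    (hmax : ∀ t ∈ Set.Icc (0:ℝ) t₀, ∀ ρ : ℝ, H t ρ ≤ H t₀ ρ₀) :
    deriv (deriv (deriv (u t₀))) ρ₀ = -γ * deriv (deriv (u t₀)) ρ₀ ∧
    deriv (deriv (deriv (deriv (u t₀)))) ρ₀ ≤ -γ * deriv (deriv (deriv (u t₀))) ρ₀ ∧
    deriv (fun s => H s ρ₀) t₀ ≤ -H t₀ ρ₀ := by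
  have ht₀mem : t₀ ∈ Set.Ico (0:ℝ) T := ⟨le_of_lt ht₀, ht₀T⟩
  set v : ℝ → ℝ := deriv (deriv (u t₀)) with hv
  -- smoothness
  have hs : ContDiff ℝ (⊤ : ℕ∞) (u t₀) := (hsmooth t₀ ht₀mem).of_le (by simp)
  have hs1 : ContDiff ℝ (⊤ : ℕ∞) (deriv (u t₀)) := (contDiff_infty_iff_deriv.mp hs).2
  have hs2 : ContDiff ℝ (⊤ : ℕ∞) v := (contDiff_infty_iff_deriv.mp hs1).2
  have hs3 : ContDiff ℝ (⊤ : ℕ∞) (deriv v) := (contDiff_infty_iff_deriv.mp hs2).2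
  have hdv : Differentiable ℝ v := (contDiff_infty_iff_deriv.mp hs2).1
  have hdv' : Differentiable ℝ (deriv v) := (contDiff_infty_iff_deriv.mp hs3).1
  -- derivative of P := fun ρ => exp(γρ) * v ρ
  set P : ℝ → ℝ := fun ρ => Real.exp (γ * ρ) * v ρ with hPdef
  have hE : ∀ ρ : ℝ, HasDerivAt (fun ρ => Real.exp (γ * ρ)) (γ * Real.exp (γ * ρ)) ρ := by
    intro ρ
    have := ((hasDerivAt_id ρ).const_mul γ).exp
    simpa [mul_comm] using this
  have hP : ∀ ρ : ℝ, HasDerivAt P (Real.exp (γ * ρ) * (γ * v ρ + deriv v ρ)) ρ := by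
    intro ρ
    have : HasDerivAt P (γ * Real.exp (γ * ρ) * v ρ + Real.exp (γ * ρ) * deriv v ρ) ρ :=
      (hE ρ).fun_mul (hdv ρ).hasDerivAt
    convert this using 1
    ring
  have hPderiv : deriv P = fun ρ => Real.exp (γ * ρ) * (γ * v ρ + deriv v ρ) :=
    funext fun ρ => (hP ρ).deriv
  have hP2 : ∀ ρ : ℝ, HasDerivAt (deriv P)
      (Real.exp (γ * ρ) * (γ * (γ * v ρ + deriv v ρ) + (γ * deriv v ρ + deriv (deriv v) ρ))) ρ := by
    intro ρ
    rw [hPderiv]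
    have : HasDerivAt (fun ρ => Real.exp (γ * ρ) * (γ * v ρ + deriv v ρ))
        (γ * Real.exp (γ * ρ) * (γ * v ρ + deriv v ρ)
          + Real.exp (γ * ρ) * (γ * deriv v ρ + deriv (deriv v) ρ)) ρ :=
      (hE ρ).fun_mul (((hdv ρ).hasDerivAt.const_mul γ).fun_add (hdv' ρ).hasDerivAt)
    convert this using 1
    ring
  -- P has a global max at ρ₀
  have hexp_t : (0:ℝ) < Real.exp (-t₀) := Real.exp_pos _
  have hPmax : ∀ ρ, P ρ ≤ P ρ₀ := by
    intro ρ
    have := hmax t₀ ⟨le_of_lt ht₀, le_refl _⟩ ρ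
    rw [hH, hH] at this
    have : Real.exp (-t₀) * P ρ ≤ Real.exp (-t₀) * P ρ₀ := by
      simpa [hPdef, mul_assoc] using this
    exact le_of_mul_le_mul_left this hexp_t
  have hPdiff : Differentiable ℝ P := fun ρ => (hP ρ).differentiableAt
  have hPdiff' : Differentiable ℝ (deriv P) := fun ρ => (hP2 ρ).differentiableAt
  have hEρ : (0:ℝ) < Real.exp (γ * ρ₀) := Real.exp_pos _
  -- first-order condition
  have h1 : deriv P ρ₀ = 0 :=
    IsLocalMax.deriv_eq_zero (Filter.Eventually.of_forall hPmax)
  rw [hPderiv] at h1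
  have hv'eq : deriv v ρ₀ = -γ * v ρ₀ := by
    rcases mul_eq_zero.mp h1 with h | h
    · exact absurd h (ne_of_gt hEρ)
    · linarith
  -- second-order condition
  have h2 : deriv (deriv P) ρ₀ ≤ 0 := second_deriv_test_max hPdiff hPdiff' hPmax
  rw [(hP2 ρ₀).deriv] at h2
  have hv''le : deriv (deriv v) ρ₀ ≤ -γ * deriv v ρ₀ := by
    have hfac : γ * (γ * v ρ₀ + deriv v ρ₀) + (γ * deriv v ρ₀ + deriv (deriv v) ρ₀) ≤ 0 := by
      by_contra hcon
      push_neg at hcon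
      nlinarith
    rw [hv'eq] at hfac ⊢
    linarith
  refine ⟨hv'eq, hv''le, ?_⟩
  -- time direction
  set g : ℝ → ℝ := fun s => deriv (deriv (u s)) ρ₀ with hg
  have hA : 0 < v ρ₀ := hu'' t₀ ht₀mem ρ₀
  have hB : 0 < deriv (u t₀) ρ₀ := hu' t₀ ht₀mem ρ₀
  have hw : 0 < a t₀ + deriv (u t₀) ρ₀ := by linarith [ha t₀]
  have hm1 : (1:ℝ) ≤ (m:ℝ) := by exact_mod_cast hm
  have hn0 : (0:ℝ) ≤ (n:ℝ) := Nat.cast_nonneg n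
  have hRHS : deriv (fun s => g s) t₀ < 0 := by
    have := hPDE t₀ ht₀mem ρ₀
    rw [show (fun s => g s) = (fun s => deriv (deriv (u s)) ρ₀) from rfl, this]
    have e1 : deriv (deriv (deriv (deriv (u t₀)))) ρ₀ = deriv (deriv v) ρ₀ := rfl
    have e2 : deriv (deriv (deriv (u t₀))) ρ₀ = deriv v ρ₀ := rfl
    rw [e1, e2, hv'eq]
    set A := v ρ₀
    set B := deriv (u t₀) ρ₀
    set w := a t₀ + deriv (u t₀) ρ₀
    have t1 : deriv (deriv v) ρ₀ / A ≤ γ^2 := by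
      rw [div_le_iff₀ hA]
      rw [hv'eq] at hv''le
      nlinarith
    have t2 : (-γ * A)^2 / A^2 = γ^2 := by
      rw [mul_pow]
      field_simp
    have t3 : 0 < (m:ℝ) * (γ * A) / B := by positivity
    have t4 : 0 ≤ (m:ℝ) * A^2 / B^2 := by positivity
    have t5 : 0 ≤ (n:ℝ) * (γ * A) / w := by positivity
    have t6 : 0 ≤ (n:ℝ) * A^2 / w^2 := by positivity
    have e3 : (m:ℝ) * (-γ * A) / B = -((m:ℝ) * (γ * A) / B) := by ring
    have e4 : (n:ℝ) * (-γ * A) / w = -((n:ℝ) * (γ * A) / w) := by ring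
    rw [t2, e3, e4]
    linarith
  have hgdiff : DifferentiableAt ℝ g t₀ := by
    by_contra hnd
    rw [deriv_zero_of_not_differentiableAt hnd] at hRHS
    exact lt_irrefl 0 hRHS
  have hexp' : HasDerivAt (fun s : ℝ => Real.exp (-s)) (-Real.exp (-t₀)) t₀ := by
    have := ((hasDerivAt_id t₀).neg).exp
    simpa using this
  have hfun : (fun s => H s ρ₀) = fun s => Real.exp (-s) * (Real.exp (γ * ρ₀) * g s) := by
    funext s
    rw [hH]
    ring
  have hHd : HasDerivAt (fun s => H s ρ₀)
      (-Real.exp (-t₀) * (Real.exp (γ * ρ₀) * g t₀)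
        + Real.exp (-t₀) * (Real.exp (γ * ρ₀) * deriv g t₀)) t₀ := by
    rw [hfun]
    exact hexp'.mul ((hgdiff.hasDerivAt).const_mul _)
  rw [hHd.deriv, hH]
  have hgv : g t₀ = v ρ₀ := rfl
  have h5 : Real.exp (-t₀) * (Real.exp (γ * ρ₀) * deriv g t₀) ≤ 0 :=
    mul_nonpos_of_nonneg_of_nonpos (le_of_lt hexp_t)
      (mul_nonpos_of_nonneg_of_nonpos (le_of_lt hEρ) (le_of_lt hRHS))
  have hgv2 : deriv (deriv (u t₀)) ρ₀ = g t₀ := rfl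
  rw [hgv2]
  linarith [h5]
end

section
/- Let m, n ≥ 1, a ≥ 0, and let u : ℝ → ℝ be smooth with u' > 0, u'' > 0. At any point where u'''/u'' = u''/u' and u⁗/u'' − u'''/u' ≤ 0, the quantity (1/u'')[u⁗/u'' − (u''')²/(u'')² + m u'''/u' − m(u'')²/(u')² + n u'''/(a+u') − n(u'')²/(a+u')²] − (1/u')[u'''/u'' + m u''/u' + n u''/(a+u') − (m+1)] is bounded above by (m+1)/u' · (1 − u''/u'). -/
/-- Pointwise algebraic inequality at the maximum point in the proof of Proposition 3.5. -/
theorem stmt_12 (m n : ℕ) (hm : 1 ≤ m) (hn : 1 ≤ n) (a : ℝ) (ha : 0 ≤ a)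
    (u : ℝ → ℝ) (hu : ContDiff ℝ (⊤ : ℕ∞) u)
    (hu' : ∀ ρ : ℝ, 0 < deriv u ρ)
    (hu'' : ∀ ρ : ℝ, 0 < deriv (deriv u) ρ)
    (ρ₀ : ℝ)
    (h1 : deriv (deriv (deriv u)) ρ₀ / deriv (deriv u) ρ₀
        = deriv (deriv u) ρ₀ / deriv u ρ₀)
    (h2 : deriv (deriv (deriv (deriv u))) ρ₀ / deriv (deriv u) ρ₀
        - deriv (deriv (deriv u)) ρ₀ / deriv u ρ₀ ≤ 0) :
    (1 / deriv (deriv u) ρ₀) *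
      (deriv (deriv (deriv (deriv u))) ρ₀ / deriv (deriv u) ρ₀
        - (deriv (deriv (deriv u)) ρ₀) ^ 2 / (deriv (deriv u) ρ₀) ^ 2
        + (m : ℝ) * deriv (deriv (deriv u)) ρ₀ / deriv u ρ₀
        - (m : ℝ) * (deriv (deriv u) ρ₀) ^ 2 / (deriv u ρ₀) ^ 2
        + (n : ℝ) * deriv (deriv (deriv u)) ρ₀ / (a + deriv u ρ₀)
        - (n : ℝ) * (deriv (deriv u) ρ₀) ^ 2 / (a + deriv u ρ₀) ^ 2)
    - (1 / deriv u ρ₀) *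
      (deriv (deriv (deriv u)) ρ₀ / deriv (deriv u) ρ₀
        + (m : ℝ) * deriv (deriv u) ρ₀ / deriv u ρ₀
        + (n : ℝ) * deriv (deriv u) ρ₀ / (a + deriv u ρ₀)
        - ((m : ℝ) + 1))
    ≤ ((m : ℝ) + 1) / deriv u ρ₀ * (1 - deriv (deriv u) ρ₀ / deriv u ρ₀) := by
  set p := deriv u ρ₀ with hpdef
  set q := deriv (deriv u) ρ₀ with hqdef
  set r := deriv (deriv (deriv u)) ρ₀ with hrdef
  set s := deriv (deriv (deriv (deriv u))) ρ₀ with hsdef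
  have hp : 0 < p := hu' ρ₀
  have hq : 0 < q := hu'' ρ₀
  have hap : 0 < a + p := by linarith
  have hr : r * p = q * q := by
    rw [div_eq_div_iff (ne_of_gt hq) (ne_of_gt hp)] at h1; linarith
  have hs : s * p ≤ r * q := by
    rw [sub_nonpos, div_le_div_iff₀ hq hp] at h2; linarith
  have hs2 : s * p ^ 2 ≤ q ^ 3 := by nlinarith
  have hrv : r = q ^ 2 / p := by
    field_simp
    nlinarith
  rw [hrv]
  rw [← sub_nonneg]
  have key : 0 ≤ (q ^ 3 - s * p ^ 2) / (q ^ 2 * p ^ 2) + (n : ℝ) * q / ((a + p) ^ 2) := by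
    have h3 : 0 ≤ (q ^ 3 - s * p ^ 2) / (q ^ 2 * p ^ 2) :=
      div_nonneg (by linarith) (by positivity)
    have h4 : 0 ≤ (n : ℝ) * q / ((a + p) ^ 2) := by positivity
    linarith
  convert key using 1
  field_simp
  ring
end

section
/- Let m > n ≥ 1 and C > 0. If u' > 0, u'' > 0, lim_{ρ→−∞} u' = 0, and (a+u')^n (u')^m u'' ≤ C e^{(n+1)ρ} for all ρ ≤ 0 with a ≥ 0, then u'(ρ) ≤ ((m+n+1)C/(n+1))^{1/(m+n+1)} e^{((n+1)/(m+n+1))ρ} for all ρ ≤ 0. -/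
/-- Proposition 5.5: the volume bound `(a+u')^n (u')^m u'' ≤ C e^{(n+1)ρ}` for `ρ ≤ 0`
integrates to `u'(ρ) ≤ ((m+n+1)C/(n+1))^{1/(m+n+1)} e^{((n+1)/(m+n+1))ρ}` on `ρ ≤ 0`. -/
theorem stmt_18 (m n : ℕ) (hn : 1 ≤ n) (hmn : n < m) (C : ℝ) (hC : 0 < C)
    (a : ℝ) (ha : 0 ≤ a) (u : ℝ → ℝ) (hu : ContDiff ℝ (⊤ : ℕ∞) u)
    (hu' : ∀ ρ : ℝ, 0 < deriv u ρ)
    (hu'' : ∀ ρ : ℝ, 0 < deriv (deriv u) ρ)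
    (hlim : Filter.Tendsto (deriv u) Filter.atBot (nhds 0))
    (hvol : ∀ ρ : ℝ, ρ ≤ 0 →
      (a + deriv u ρ) ^ n * (deriv u ρ) ^ m * deriv (deriv u) ρ
        ≤ C * Real.exp (((n : ℝ) + 1) * ρ)) :
    ∀ ρ : ℝ, ρ ≤ 0 →
      deriv u ρ ≤
        (((m : ℝ) + (n : ℝ) + 1) * C / ((n : ℝ) + 1)) ^
            ((1 : ℝ) / ((m : ℝ) + (n : ℝ) + 1)) *
          Real.exp (((n : ℝ) + 1) / ((m : ℝ) + (n : ℝ) + 1) * ρ) := by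
  intro ρ hρ
  set M : ℕ := m + n + 1 with hM
  have hMR : ((M : ℝ)) = (m : ℝ) + (n : ℝ) + 1 := by push_cast [hM]; ring
  have hMpos : (0 : ℝ) < (M : ℝ) := by positivity
  have hn1 : (0 : ℝ) < (n : ℝ) + 1 := by positivity
  set K : ℝ := (M : ℝ) * C / ((n : ℝ) + 1) with hK
  have hKpos : 0 < K := by positivity
  have huinf : ContDiff ℝ ((⊤ : ℕ∞) : WithTop ℕ∞) u := hu.of_le (by simp)
  have hud : Differentiable ℝ (deriv u) :=
    ((contDiff_infty_iff_deriv.mp huinf).2).differentiable (by simp)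
  set g : ℝ → ℝ := fun ρ => K * Real.exp (((n : ℝ) + 1) * ρ) - (deriv u ρ) ^ M with hg
  -- g has derivative K*(n+1)*exp((n+1)x) - M*(u' x)^(M-1)*u'' x at each x
  have hgd : ∀ x : ℝ, HasDerivAt g
      (K * (((n : ℝ) + 1) * Real.exp (((n : ℝ) + 1) * x))
        - (M : ℝ) * (deriv u x) ^ (M - 1) * deriv (deriv u) x) x := by
    intro x
    have h1 : HasDerivAt (fun ρ : ℝ => K * Real.exp (((n : ℝ) + 1) * ρ))
        (K * (((n : ℝ) + 1) * Real.exp (((n : ℝ) + 1) * x))) x := by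
      have := (Real.hasDerivAt_exp (((n : ℝ) + 1) * x)).comp x
        ((hasDerivAt_id x).const_mul (((n : ℝ) + 1)))
      simpa [mul_comm, mul_assoc, mul_left_comm] using this.const_mul K
    have h2 : HasDerivAt (fun ρ : ℝ => (deriv u ρ) ^ M)
        ((M : ℝ) * (deriv u x) ^ (M - 1) * deriv (deriv u) x) x :=
      ((hud x).hasDerivAt).pow M
    exact h1.sub h2
  -- derivative of g is nonneg on Iio 0
  have hderiv_nonneg : ∀ x ∈ Set.Iio (0 : ℝ), 0 ≤ deriv g x := by
    intro x hx
    rw [(hgd x).deriv]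
    have hx0 : x ≤ 0 := le_of_lt hx
    have hkey : (M : ℝ) * (deriv u x) ^ (M - 1) * deriv (deriv u) x
        ≤ (M : ℝ) * (C * Real.exp (((n : ℝ) + 1) * x)) := by
      have hpow : (deriv u x) ^ (M - 1) * deriv (deriv u) x
          ≤ (a + deriv u x) ^ n * (deriv u x) ^ m * deriv (deriv u) x := by
        have hM1 : M - 1 = n + m := by omega
        rw [hM1, pow_add]
        have : (deriv u x) ^ n ≤ (a + deriv u x) ^ n :=
          pow_le_pow_left₀ (le_of_lt (hu' x)) (by linarith) n
        have h2 := mul_le_mul_of_nonneg_right this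
          (le_of_lt (pow_pos (hu' x) m))
        exact mul_le_mul_of_nonneg_right h2 (le_of_lt (hu'' x))
      calc (M : ℝ) * (deriv u x) ^ (M - 1) * deriv (deriv u) x
          = (M : ℝ) * ((deriv u x) ^ (M - 1) * deriv (deriv u) x) := by ring
        _ ≤ (M : ℝ) * ((a + deriv u x) ^ n * (deriv u x) ^ m * deriv (deriv u) x) :=
            mul_le_mul_of_nonneg_left hpow (le_of_lt hMpos)
        _ ≤ (M : ℝ) * (C * Real.exp (((n : ℝ) + 1) * x)) :=
            mul_le_mul_of_nonneg_left (hvol x hx0) (le_of_lt hMpos)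
    have hKrw : K * (((n : ℝ) + 1) * Real.exp (((n : ℝ) + 1) * x))
        = (M : ℝ) * (C * Real.exp (((n : ℝ) + 1) * x)) := by
      rw [hK, div_mul_eq_mul_div, div_eq_iff hn1.ne']; ring
    linarith
  -- g is monotone on Iic 0
  have hcont : ContinuousOn g (Set.Iic (0 : ℝ)) :=
    (fun x _ => ((hgd x).continuousAt).continuousWithinAt)
  have hmono : MonotoneOn g (Set.Iic (0 : ℝ)) := by
    apply monotoneOn_of_deriv_nonneg (convex_Iic 0) hcont
    · intro x hx
      rw [interior_Iic] at hx
      exact ((hgd x).differentiableAt).differentiableWithinAt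
    · intro x hx
      rw [interior_Iic] at hx
      exact hderiv_nonneg x hx
  -- g tends to 0 at -∞
  have hglim : Filter.Tendsto g Filter.atBot (nhds 0) := by
    have h1 : Filter.Tendsto (fun ρ : ℝ => K * Real.exp (((n : ℝ) + 1) * ρ))
        Filter.atBot (nhds 0) := by
      have := Real.tendsto_exp_atBot.comp
        (Filter.tendsto_atBot_atBot.2 (fun b => ⟨b / ((n : ℝ) + 1), fun x hx => by
          nlinarith [(le_div_iff₀ hn1).mp hx]⟩) :
          Filter.Tendsto (fun ρ : ℝ => ((n : ℝ) + 1) * ρ) Filter.atBot Filter.atBot)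
      simpa using this.const_mul K
    have h2 : Filter.Tendsto (fun ρ : ℝ => (deriv u ρ) ^ M) Filter.atBot
        (nhds 0) := by
      have := hlim.pow M
      simpa [zero_pow (by omega : M ≠ 0)] using this
    simpa using h1.sub h2
  -- hence g ρ ≥ 0, i.e. (u' ρ)^M ≤ K exp((n+1)ρ)
  have hg0 : 0 ≤ g ρ := by
    apply le_of_tendsto hglim
    filter_upwards [Filter.eventually_le_atBot ρ] with s hs
    exact hmono (le_trans hs hρ) hρ hs
  have hbound : (deriv u ρ) ^ M ≤ K * Real.exp (((n : ℝ) + 1) * ρ) := by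
    have := hg0; simp only [hg] at this; linarith
  -- take (1/M) powers
  have hstep : ((deriv u ρ) ^ M : ℝ) ^ ((1 : ℝ) / (M : ℝ))
      ≤ (K * Real.exp (((n : ℝ) + 1) * ρ)) ^ ((1 : ℝ) / (M : ℝ)) :=
    Real.rpow_le_rpow (le_of_lt (pow_pos (hu' ρ) M)) hbound (by positivity)
  have hlhs : ((deriv u ρ) ^ M : ℝ) ^ ((1 : ℝ) / (M : ℝ)) = deriv u ρ := by
    rw [← Real.rpow_natCast (deriv u ρ) M, ← Real.rpow_mul (le_of_lt (hu' ρ))]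
    rw [mul_one_div, div_self (ne_of_gt hMpos), Real.rpow_one]
  have hrhs : (K * Real.exp (((n : ℝ) + 1) * ρ)) ^ ((1 : ℝ) / (M : ℝ))
      = K ^ ((1 : ℝ) / (M : ℝ)) *
        Real.exp (((n : ℝ) + 1) / (M : ℝ) * ρ) := by
    rw [Real.mul_rpow (le_of_lt hKpos) (le_of_lt (Real.exp_pos _)),
      ← Real.exp_mul]
    ring_nf
  rw [hlhs, hrhs] at hstep
  rw [← hMR]
  exact hstep
end
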